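/- Let p be an odd prime, let m ≥ 1, let N be the p-adic valuation of m, and let 0 ≤ s ≤ N. Then the p-adic valuation of S(m, p^s − 1) is exactly N − s; i.e., p^{N−s} divides S(m, p^s − 1) but p^{N−s+1} does not. (The key odd-primary valuation computation in the proof of Theorem 4.4.) -/

import Mathlib

/-!
Write `q = p ^ s` and `N = v_p(m)`. Summing Pascal's rule over `k` gives the recurrence
`2 S(m, n+1) + S(m, n) = C(2m, n+1) + C(2m, n+2)`, with `2 S(m, 0) = C(2m, 1)`.
From `t C(2m, t) = 2m C(2m-1, t-1)` and `v_p(t) < s` for `0 < t < q`, all these `C(2m, t)`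
vanish modulo `p ^ (N-s+1)`; since `2` is invertible, the recurrence then gives
`2 S(m, q-1) ≡ C(2m, q) [MOD p ^ (N-s+1)]`. Finally `v_p(C(2m, q)) = N - s` exactly, because
`q C(2m, q) = 2m C(2m-1, q-1)` and, by Pascal's rule and the same vanishing,
`C(2m-1, t) ≡ (-1)^t [MOD p]` for `t < q`.
-/

/-- `S(m,i) = Σ_{k=1}^{m} C(2k-1, i)`. -/
def Smi (m i : ℕ) : ℕ := ∑ k ∈ Finset.Icc 1 m, (2*k-1).choose i

open Finset

theorem smi_zero (i : ℕ) : Smi 0 i = 0 := by simp [Smi]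

theorem smi_succ (m i : ℕ) : Smi (m + 1) i = Smi m i + (2 * m + 1).choose i := by
  rw [Smi, sum_Icc_succ_top (by omega), ← Smi, show 2 * (m + 1) - 1 = 2 * m + 1 by omega]

theorem smi_zero_right (m : ℕ) : Smi m 0 = m := by simp [Smi]

theorem two_mul_smi_succ_add_smi (m n : ℕ) :
    2 * Smi m (n + 1) + Smi m n = (2 * m).choose (n + 1) + (2 * m).choose (n + 2) := by
  induction m with
  | zero => simp [smi_zero]
  | succ m ih =>
    rw [show n + 2 = n + 1 + 1 from rfl] at ih ⊢
    rw [smi_succ, smi_succ, show 2 * (m + 1) = 2 * m + 1 + 1 by ring]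
    simp only [Nat.choose_succ_succ']
    omega

theorem two_mul_smi_modEq_choose {d m n : ℕ} (hd : d.Coprime 2)
    (h : ∀ t ∈ Icc 1 n, d ∣ (2 * m).choose t) :
    2 * Smi m n ≡ (2 * m).choose (n + 1) [MOD d] := by
  induction n with
  | zero => simp [smi_zero_right, Nat.ModEq.refl]
  | succ n ih =>
    have hC : d ∣ (2 * m).choose (n + 1) := h (n + 1) (by simp)
    have ih := ih fun t ht => h t (by simp at ht ⊢; omega)
    have hS : Smi m n ≡ 0 [MOD d] :=
      Nat.modEq_zero_iff_dvd.mpr (hd.dvd_of_dvd_mul_left ((ih.dvd_iff dvd_rfl).mpr hC))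
    calc 2 * Smi m (n + 1) = 2 * Smi m (n + 1) + 0 := rfl
      _ ≡ 2 * Smi m (n + 1) + Smi m n [MOD d] := hS.symm.add_left _
      _ = (2 * m).choose (n + 1) + (2 * m).choose (n + 2) := two_mul_smi_succ_add_smi m n
      _ ≡ 0 + (2 * m).choose (n + 2) [MOD d] := (Nat.modEq_zero_iff_dvd.mpr hC).add_right _
      _ = (2 * m).choose (n + 2) := zero_add _

theorem factorization_le_factorization_add_factorization_choose (p : ℕ) {n t : ℕ}
    (ht : t ≠ 0) (htn : t ≤ n) :
    n.factorization p ≤ t.factorization p + (n.choose t).factorization p := by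
  obtain ⟨n, rfl⟩ : ∃ n', n = n' + 1 := ⟨n - 1, by omega⟩
  obtain ⟨t, rfl⟩ : ∃ t', t = t' + 1 := ⟨t - 1, by omega⟩
  have hdvd : n + 1 ∣ (t + 1) * (n + 1).choose (t + 1) :=
    ⟨n.choose t, by rw [Nat.add_one_mul_choose_eq]; ring⟩
  have hC : (n + 1).choose (t + 1) ≠ 0 := (Nat.choose_pos htn).ne'
  rw [← Finsupp.add_apply, ← Nat.factorization_mul ht hC]
  exact (Nat.factorization_le_iff_dvd n.succ_ne_zero (Nat.mul_ne_zero ht hC)).mpr hdvd p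

theorem pow_dvd_choose_of_lt_pow {p n s t : ℕ} (hp : p.Prime) (ht : t ≠ 0) (hts : t < p ^ s) :
    p ^ (n.factorization p + 1 - s) ∣ n.choose t := by
  rcases lt_or_ge n t with htn | htn
  · rw [Nat.choose_eq_zero_of_lt htn]
    exact dvd_zero _
  have hvt : t.factorization p < s :=
    (Nat.pow_lt_pow_iff_right hp.one_lt).mp ((Nat.ordProj_le p ht).trans_lt hts)
  have := factorization_le_factorization_add_factorization_choose p ht htn
  rw [hp.pow_dvd_iff_le_factorization (Nat.choose_pos htn).ne']
  omega

theorem choose_sub_one_eq_neg_one_pow {p n s : ℕ} (hp : p.Prime) (hn : n ≠ 0)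
    (hdvd : p ^ s ∣ n) :
    ∀ t < p ^ s, ((n - 1).choose t : ZMod p) = (-1) ^ t := by
  have hs : s ≤ n.factorization p := (hp.pow_dvd_iff_le_factorization hn).mp hdvd
  intro t
  induction t with
  | zero => simp
  | succ t ih =>
    intro ht
    have hpascal : n.choose (t + 1) = (n - 1).choose t + (n - 1).choose (t + 1) := by
      conv_lhs => rw [← Nat.sub_add_cancel (Nat.one_le_iff_ne_zero.mpr hn)]
      exact Nat.choose_succ_succ' _ _
    have hzero : (n.choose (t + 1) : ZMod p) = 0 :=
      (ZMod.natCast_eq_zero_iff _ _).mpr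
        ((dvd_pow_self p (by omega)).trans (pow_dvd_choose_of_lt_pow hp t.succ_ne_zero ht))
    rw [hpascal, Nat.cast_add, ih (by omega)] at hzero
    linear_combination hzero

theorem factorization_choose_prime_pow {p n s : ℕ} (hp : p.Prime) (hn : n ≠ 0)
    (hdvd : p ^ s ∣ n) : (n.choose (p ^ s)).factorization p = n.factorization p - s := by
  have := Fact.mk hp
  have hq : 1 ≤ p ^ s := Nat.one_le_pow _ _ hp.pos
  have hqn : p ^ s ≤ n := Nat.le_of_dvd (by omega) hdvd
  have hunit : ¬ p ∣ (n - 1).choose (p ^ s - 1) := by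
    rw [← ZMod.natCast_eq_zero_iff, choose_sub_one_eq_neg_one_pow hp hn hdvd _ (by omega)]
    exact pow_ne_zero _ (neg_ne_zero.mpr one_ne_zero)
  have key : p ^ s * n.choose (p ^ s) = n * (n - 1).choose (p ^ s - 1) := by
    have := Nat.add_one_mul_choose_eq (n - 1) (p ^ s - 1)
    rw [Nat.sub_add_cancel (by omega), Nat.sub_add_cancel hq] at this
    rw [this, mul_comm]
  have h := congrArg (·.factorization p) key
  simp only [Nat.factorization_mul (pow_ne_zero s hp.ne_zero) (Nat.choose_pos hqn).ne',
    Nat.factorization_mul hn (Nat.choose_pos (show p ^ s - 1 ≤ n - 1 by omega)).ne',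
    Finsupp.add_apply, Nat.factorization_pow, Finsupp.smul_apply, hp.factorization_self,
    smul_eq_mul, mul_one, Nat.factorization_eq_zero_of_not_dvd hunit] at h
  omega

theorem factorization_two_mul {p : ℕ} (hp : p.Prime) (h2 : p ≠ 2) {m : ℕ} (hm : m ≠ 0) :
    (2 * m).factorization p = m.factorization p := by
  have hndvd : ¬ p ∣ 2 := fun h => h2 ((Nat.prime_dvd_prime_iff_eq hp Nat.prime_two).mp h)
  rw [Nat.factorization_mul two_ne_zero hm, Finsupp.add_apply,
    Nat.factorization_eq_zero_of_not_dvd hndvd, zero_add]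

theorem pow_dvd_and_not_pow_succ_dvd_of_two_mul_modEq {p r x c : ℕ} (hp : p.Prime)
    (hp2 : p.Coprime 2) (hc : c ≠ 0) (hcr : c.factorization p = r)
    (h : 2 * x ≡ c [MOD p ^ (r + 1)]) : p ^ r ∣ x ∧ ¬ p ^ (r + 1) ∣ x := by
  constructor
  · refine (hp2.pow_left r).dvd_of_dvd_mul_left ((h.dvd_iff (pow_dvd_pow p r.le_succ)).mpr ?_)
    exact (hp.pow_dvd_iff_le_factorization hc).mpr hcr.ge
  · intro hx
    have := (h.dvd_iff dvd_rfl).mp (hx.mul_left 2)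
    rw [hp.pow_dvd_iff_le_factorization hc] at this
    omega

/-- The odd-primary valuation computation in the proof of Theorem 4.4: for an odd
prime `p`, with `N` the `p`-adic valuation of `m` and `0 ≤ s ≤ N`, the `p`-adic
valuation of `S(m, p^s - 1)` is exactly `N - s`. -/
theorem stmt10 (p m s : ℕ) (hp : p.Prime) (hodd : p ≠ 2) (hm : 1 ≤ m)
    (hs : s ≤ m.factorization p) :
    p ^ (m.factorization p - s) ∣ Smi m (p^s - 1) ∧
    ¬ p ^ (m.factorization p - s + 1) ∣ Smi m (p^s - 1) := by
  set N := m.factorization p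
  have hp2 : p.Coprime 2 := (Nat.coprime_primes hp Nat.prime_two).mpr hodd
  have hN : (2 * m).factorization p = N := factorization_two_mul hp hodd (by omega)
  have hdvd : p ^ s ∣ 2 * m := ((hp.pow_dvd_iff_le_factorization (by omega)).mpr hs).mul_left 2
  have hsmall : ∀ t ∈ Icc 1 (p ^ s - 1), p ^ (N - s + 1) ∣ (2 * m).choose t := by
    intro t ht
    rw [mem_Icc] at ht
    have := pow_dvd_choose_of_lt_pow (n := 2 * m) hp (by omega : t ≠ 0) (by omega : t < p ^ s)
    rwa [hN, show N + 1 - s = N - s + 1 by omega] at this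
  have hcong := two_mul_smi_modEq_choose (hp2.pow_left (N - s + 1)) hsmall
  rw [Nat.sub_add_cancel (Nat.one_le_pow _ _ hp.pos)] at hcong
  exact pow_dvd_and_not_pow_succ_dvd_of_two_mul_modEq hp hp2
    (Nat.choose_pos (Nat.le_of_dvd (by omega) hdvd)).ne'
    (by rw [factorization_choose_prime_pow hp (by omega) hdvd, hN]) hcong
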